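/- arXiv:2004.06828 — 8 statements merged into one kernel-verified Lean document; each statement's English description precedes it below -/
import Mathlib

section
/- Let $0 < p, q < 1$ be real numbers with $p + q < 1$. If $z, w$ are complex numbers such that $|z - (1-p)| \le p$ and $|w - (1-q)| \le q$, then $|zw - (1-p-q)| \le p+q$. -/
/-!
Write `z * w - (1 - p - q) = (z - (1 - p)) * w + (1 - p) * (w - (1 - q)) + p * q`.
The disk `‖w - (1 - q)‖ ≤ q` lies in the unit disk, so the triangle inequality bounds the
right-hand side by `p + (1 - p) q + p q = p + q`.
-/

namespace RCLike

variable {𝕜 : Type*} [RCLike 𝕜]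

lemma norm_ofReal_one_sub {q : ℝ} (hq : q ≤ 1) : ‖(1 - q : 𝕜)‖ = 1 - q := by
  rw [← ofReal_one, ← ofReal_sub, norm_ofReal, abs_of_nonneg (sub_nonneg.mpr hq)]

lemma norm_le_one_of_norm_sub_one_sub_le {q : ℝ} {w : 𝕜} (hq : q ≤ 1)
    (hw : ‖w - (1 - q)‖ ≤ q) : ‖w‖ ≤ 1 :=
  calc ‖w‖ = ‖(w - (1 - q)) + (1 - q)‖ := by rw [sub_add_cancel]
    _ ≤ ‖w - (1 - q)‖ + ‖(1 - q : 𝕜)‖ := norm_add_le _ _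
    _ ≤ q + (1 - q) := by rw [norm_ofReal_one_sub hq]; linarith
    _ = 1 := add_sub_cancel _ _

lemma norm_mul_sub_one_sub_add_le {p q : ℝ} {z w : 𝕜} (hp : p ≤ 1) (hq : q ≤ 1)
    (hz : ‖z - (1 - p)‖ ≤ p) (hw : ‖w - (1 - q)‖ ≤ q) :
    ‖z * w - (1 - p - q)‖ ≤ p + q := by
  have hp0 : 0 ≤ p := (norm_nonneg _).trans hz
  have hq0 : 0 ≤ q := (norm_nonneg _).trans hw
  have hw1 := norm_le_one_of_norm_sub_one_sub_le hq hw
  have hpq : ‖(p * q : 𝕜)‖ = p * q := by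
    rw [← ofReal_mul, norm_ofReal, abs_of_nonneg (mul_nonneg hp0 hq0)]
  calc ‖z * w - (1 - p - q)‖
      = ‖(z - (1 - p)) * w + (1 - p) * (w - (1 - q)) + p * q‖ := by ring_nf
    _ ≤ ‖z - (1 - p)‖ * ‖w‖ + ‖(1 - p : 𝕜)‖ * ‖w - (1 - q)‖ + ‖(p * q : 𝕜)‖ := by
      grw [norm_add₃_le, norm_mul, norm_mul]
    _ ≤ p * 1 + (1 - p) * q + p * q := by
      rw [norm_ofReal_one_sub hp, hpq]
      gcongr
    _ = p + q := by ring

end RCLike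

theorem stmt0_general (p q : ℝ) (hp1 : p < 1) (hq1 : q < 1)
    (z w : ℂ)
    (hz : ‖z - (1 - p)‖ ≤ p) (hw : ‖w - (1 - q)‖ ≤ q) :
    ‖z * w - (1 - p - q)‖ ≤ p + q :=
  RCLike.norm_mul_sub_one_sub_add_le hp1.le hq1.le hz hw

theorem stmt0 (p q : ℝ) (hp0 : 0 < p) (hp1 : p < 1) (hq0 : 0 < q) (hq1 : q < 1)
    (hpq : p + q < 1) (z w : ℂ)
    (hz : ‖z - (1 - p)‖ ≤ p) (hw : ‖w - (1 - q)‖ ≤ q) :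
    ‖z * w - (1 - p - q)‖ ≤ p + q :=
  stmt0_general p q hp1 hq1 z w hz hw
end

section
/- Let $0 < p < 1$ be a real number and $k$ a positive integer. If $z$ is a complex number satisfying $|z - (1 - p/k)| \le p/k$, then $|z^k - (1-p)| \le p$. -/
/-!
Put `a = 1 - p / k`. The disc `‖z - a‖ ≤ 1 - a` lies in the closed unit disc and is tangent to
the unit circle at `1`; the identity `z ^ (n + 1) - a ^ (n + 1) = z (z ^ n - a ^ n) + a ^ n (z - a)`
shows inductively that `z ↦ z ^ n` maps it into the disc `‖w - a ^ n‖ ≤ 1 - a ^ n`.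
By Bernoulli's inequality `1 - p ≤ a ^ k`, so this last disc lies in `‖w - (1 - p)‖ ≤ p`.
-/

namespace Complex

variable {a : ℝ} {z : ℂ}

lemma norm_le_one_of_norm_sub_ofReal_le (ha : 0 ≤ a) (hz : ‖z - a‖ ≤ 1 - a) : ‖z‖ ≤ 1 :=
  calc ‖z‖ ≤ ‖z - a‖ + ‖(a : ℂ)‖ := norm_le_norm_sub_add z a
    _ ≤ (1 - a) + a := by rw [norm_real, Real.norm_of_nonneg ha]; linarith
    _ = 1 := by ring

lemma norm_pow_sub_ofReal_pow_le (ha : 0 ≤ a) (hz : ‖z - a‖ ≤ 1 - a) (n : ℕ) :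
    ‖z ^ n - (a : ℂ) ^ n‖ ≤ 1 - a ^ n := by
  have hz1 : ‖z‖ ≤ 1 := norm_le_one_of_norm_sub_ofReal_le ha hz
  induction n with
  | zero => simp
  | succ n ih =>
    have han : ‖(a : ℂ) ^ n‖ = a ^ n := by
      rw [norm_pow, norm_real, Real.norm_of_nonneg ha]
    calc ‖z ^ (n + 1) - (a : ℂ) ^ (n + 1)‖
        = ‖z * (z ^ n - (a : ℂ) ^ n) + (a : ℂ) ^ n * (z - a)‖ := by ring_nf
      _ ≤ ‖z‖ * ‖z ^ n - (a : ℂ) ^ n‖ + a ^ n * ‖z - a‖ := by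
        rw [← han, ← norm_mul, ← norm_mul]; exact norm_add_le _ _
      _ ≤ 1 * (1 - a ^ n) + a ^ n * (1 - a) := by gcongr
      _ = 1 - a ^ (n + 1) := by ring

end Complex

theorem stmt1_general (p : ℝ) (hp1 : p < 1) (k : ℕ) (hk : 0 < k) (z : ℂ)
    (hz : ‖z - (1 - p / k)‖ ≤ p / k) :
    ‖z ^ k - (1 - p)‖ ≤ p := by
  set a : ℝ := 1 - p / k with ha_def
  have hk1 : (1 : ℝ) ≤ k := Nat.one_le_cast.mpr hk
  have ha : 0 ≤ a := by
    rw [ha_def, sub_nonneg, div_le_one (by linarith)]; linarith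
  have hza : ‖z - a‖ ≤ 1 - a := by push_cast [ha_def]; simpa using hz
  have hbernoulli : 1 - p ≤ a ^ k := by
    have := one_add_mul_sub_le_pow (by linarith : -1 ≤ a) k
    rwa [ha_def, sub_sub_cancel_left, mul_neg, mul_div_cancel₀ _ (by positivity),
      ← sub_eq_add_neg] at this
  have hpow := Complex.norm_pow_sub_ofReal_pow_le ha hza k
  calc ‖z ^ k - (1 - p)‖ ≤ ‖z ^ k - (a : ℂ) ^ k‖ + ‖(a : ℂ) ^ k - (1 - p)‖ :=
        norm_sub_le_norm_sub_add_norm_sub _ _ _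
    _ = ‖z ^ k - (a : ℂ) ^ k‖ + (a ^ k - (1 - p)) := by
        rw [← Complex.ofReal_pow, ← Complex.ofReal_one, ← Complex.ofReal_sub,
          ← Complex.ofReal_sub, Complex.norm_real, Real.norm_of_nonneg (by linarith)]
    _ ≤ p := by linarith

theorem stmt1 (p : ℝ) (hp0 : 0 < p) (hp1 : p < 1) (k : ℕ) (hk : 0 < k) (z : ℂ)
    (hz : ‖z - (1 - p / k)‖ ≤ p / k) :
    ‖z ^ k - (1 - p)‖ ≤ p :=
  stmt1_general p hp1 k hk z hz
end

section
/- Let $z$ be a complex number with $|z| = 1$ and $|\arg z| \le \theta$ for some real $\theta \ge 0$. Then for any real $0 < p < 1$, $\left|\frac{z - (1-p)}{p}\right| \le 1 + \frac{\theta^2}{p^2}$. -/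
/-! On the unit circle `‖z - a‖² = (1 - a)² + 2a(1 - cos (arg z))`, and `2(1 - cos x) ≤ x²`.
With `a = 1 - p` this gives `‖(z - (1 - p)) / p‖² ≤ 1 + (arg z)² / p² ≤ 1 + θ² / p²`,
and `1 + x ≤ (1 + x)²` for `x ≥ 0`. -/

open Complex

theorem Complex.norm_sub_ofReal_sq_of_norm_eq_one {z : ℂ} (hz : ‖z‖ = 1) (a : ℝ) :
    ‖z - a‖ ^ 2 = (1 - a) ^ 2 + 2 * a * (1 - Real.cos (arg z)) := by
  have hre : z.re = Real.cos (arg z) := by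
    rw [cos_arg (norm_ne_zero_iff.mp (hz ▸ one_ne_zero)), hz, div_one]
  have hnormSq : z.re ^ 2 + z.im ^ 2 = 1 := by
    rw [← one_pow 2, ← hz, Complex.sq_norm, normSq_apply]; ring
  rw [Complex.sq_norm, normSq_apply, sub_re, sub_im, ofReal_re, ofReal_im, ← hre]
  linear_combination hnormSq

theorem Real.two_mul_one_sub_cos_le_sq (x : ℝ) : 2 * (1 - Real.cos x) ≤ x ^ 2 := by
  linarith [Real.one_sub_sq_div_two_le_cos (x := x)]

theorem Complex.norm_sub_ofReal_sq_le {z : ℂ} (hz : ‖z‖ = 1) {a : ℝ} (ha : a ≤ 1) :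
    ‖z - a‖ ^ 2 ≤ (1 - a) ^ 2 + arg z ^ 2 := by
  have hcos : 0 ≤ 1 - Real.cos (arg z) := sub_nonneg.mpr (Real.cos_le_one _)
  rw [norm_sub_ofReal_sq_of_norm_eq_one hz]
  nlinarith [Real.two_mul_one_sub_cos_le_sq (arg z)]

theorem Complex.norm_sub_one_sub_div_sq_le {z : ℂ} (hz : ‖z‖ = 1) {p : ℝ} (hp : 0 < p) :
    ‖(z - (1 - p)) / p‖ ^ 2 ≤ 1 + arg z ^ 2 / p ^ 2 := by
  have h := norm_sub_ofReal_sq_le hz (a := 1 - p) (by linarith)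
  rw [sub_sub_cancel, ofReal_sub, ofReal_one] at h
  rw [norm_div, norm_real, Real.norm_of_nonneg hp.le, div_pow, div_le_iff₀ (by positivity)]
  calc ‖z - (1 - p)‖ ^ 2 ≤ p ^ 2 + arg z ^ 2 := h
    _ = (1 + arg z ^ 2 / p ^ 2) * p ^ 2 := by field_simp

theorem stmt2_general (z : ℂ) (θ : ℝ) (hz : ‖z‖ = 1)
    (harg : |Complex.arg z| ≤ θ) (p : ℝ) (hp0 : 0 < p) :
    ‖(z - (1 - p)) / p‖ ≤ 1 + θ ^ 2 / p ^ 2 := by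
  have harg_sq : Complex.arg z ^ 2 ≤ θ ^ 2 := sq_le_sq' (abs_le.mp harg).1 (abs_le.mp harg).2
  have hx : 0 ≤ θ ^ 2 / p ^ 2 := by positivity
  have hsq : ‖(z - (1 - p)) / p‖ ^ 2 ≤ (1 + θ ^ 2 / p ^ 2) ^ 2 :=
    calc ‖(z - (1 - p)) / p‖ ^ 2 ≤ 1 + Complex.arg z ^ 2 / p ^ 2 :=
          Complex.norm_sub_one_sub_div_sq_le hz hp0
      _ ≤ 1 + θ ^ 2 / p ^ 2 := by gcongr
      _ ≤ (1 + θ ^ 2 / p ^ 2) ^ 2 := by nlinarith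
  exact le_of_sq_le_sq hsq (by positivity)

theorem stmt2 (z : ℂ) (θ : ℝ) (hθ : 0 ≤ θ) (hz : ‖z‖ = 1)
    (harg : |Complex.arg z| ≤ θ) (p : ℝ) (hp0 : 0 < p) (hp1 : p < 1) :
    ‖(z - (1 - p)) / p‖ ≤ 1 + θ ^ 2 / p ^ 2 :=
  stmt2_general z θ hz harg p hp0
end

section
/- Let $\ell \ge 1$, let $a_1, \dots, a_\ell$ be real numbers, let $u_1, \dots, u_\ell$ be distinct complex numbers, and let $\varepsilon > 0$. If $\sum_{i=1}^{\ell} |a_i| \ge \varepsilon$, then there exists some integer $k$ with $0 \le k < \ell$ such that $\left|\sum_{i=1}^{\ell} a_i u_i^k\right| \ge \frac{\varepsilon}{\ell} \cdot \frac{\prod_{i > j} |u_i - u_j|}{\left(\sum_{i=1}^{\ell} \sum_{k=0}^{\ell-1} |u_i|^{2k}\right)^{(\ell-1)/2}}$. -/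
/-! Let `W` be the transposed Vandermonde matrix, so that the sums `∑ i, a i * u i ^ k` are the
entries of `W *ᵥ a`. The eigenvalues `λ i ≥ 0` of `Wᴴ * W` satisfy `∏ λ = ‖det W‖²` and
`∑ λ = ‖W‖²` (Frobenius norm), hence `‖det W‖² ≤ λ i * ‖W‖ ^ (2 * (ℓ - 1))` for every `i`.
Expanding `a` in an orthonormal eigenbasis of `Wᴴ * W` turns this into
`‖det W‖ * ‖a‖₂ ≤ ‖W‖ ^ (ℓ - 1) * ‖W *ᵥ a‖₂`, and comparing `ℓ¹`, `ℓ²` and `ℓ^∞` norms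
costs a factor `√ℓ` on each side. -/

open Finset Matrix
open scoped InnerProductSpace

theorem Finset.prod_le_mul_pow_sum {ι R : Type*} [CommSemiring R] [PartialOrder R]
    [IsOrderedRing R] {s : Finset ι} {f : ι → R} (hf : ∀ j ∈ s, 0 ≤ f j) {i : ι} (hi : i ∈ s) :
    ∏ j ∈ s, f j ≤ f i * (∑ j ∈ s, f j) ^ (#s - 1) := by
  classical
  rw [← mul_prod_erase s f hi, ← card_erase_of_mem hi]
  refine mul_le_mul_of_nonneg_left ?_ (hf i hi)
  rw [← prod_const]
  exact prod_le_prod (fun j hj => hf j (mem_of_mem_erase hj))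
    fun j hj => single_le_sum hf (mem_of_mem_erase hj)

attribute [local instance] Matrix.frobeniusNormedAddCommGroup

namespace EuclideanSpace

variable {𝕜 n : Type*} [RCLike 𝕜] [Fintype n]

theorem sq_sum_norm_le_card_mul_norm_sq (y : EuclideanSpace 𝕜 n) :
    (∑ i, ‖y i‖) ^ 2 ≤ Fintype.card n * ‖y‖ ^ 2 := by
  rw [norm_sq_eq, ← card_univ]
  exact sq_sum_le_card_mul_sum_sq

theorem norm_sq_le_card_mul_sq (y : EuclideanSpace 𝕜 n) (k : n) (hk : ∀ i, ‖y i‖ ≤ ‖y k‖) :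
    ‖y‖ ^ 2 ≤ Fintype.card n * ‖y k‖ ^ 2 := by
  rw [norm_sq_eq, ← nsmul_eq_mul, ← card_univ, ← sum_const]
  exact sum_le_sum fun i _ => pow_le_pow_left₀ (norm_nonneg _) (hk i) 2

end EuclideanSpace

namespace Matrix

theorem frobenius_norm_sq {α m n : Type*} [Fintype m] [Fintype n] [NormedAddCommGroup α]
    (W : Matrix m n α) :
    ‖W‖ ^ 2 = ∑ i, ∑ j, ‖W i j‖ ^ 2 := by
  rw [frobenius_norm_def, ← Real.rpow_natCast, ← Real.rpow_mul (by positivity)]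
  norm_num [Real.rpow_two]

variable {𝕜 n : Type*} [RCLike 𝕜] [Fintype n] [DecidableEq n]

theorem IsHermitian.toEuclideanLin_eigenvectorBasis {A : Matrix n n 𝕜} (hA : A.IsHermitian)
    (i : n) :
    A.toEuclideanLin (hA.eigenvectorBasis i) = (hA.eigenvalues i : 𝕜) • hA.eigenvectorBasis i := by
  ext j
  simpa [RCLike.real_smul_eq_coe_mul] using congrFun (hA.mulVec_eigenvectorBasis i) j

theorem IsHermitian.re_inner_toEuclideanLin_self {A : Matrix n n 𝕜} (hA : A.IsHermitian)
    (x : EuclideanSpace 𝕜 n) :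
    RCLike.re ⟪x, A.toEuclideanLin x⟫_𝕜 =
      ∑ i, hA.eigenvalues i * ‖⟪hA.eigenvectorBasis i, x⟫_𝕜‖ ^ 2 := by
  have hT := isSymmetric_toEuclideanLin_iff.mpr hA
  rw [← hA.eigenvectorBasis.sum_inner_mul_inner, map_sum]
  refine sum_congr rfl fun i _ => ?_
  rw [← hT, hA.toEuclideanLin_eigenvectorBasis, inner_smul_left, RCLike.conj_ofReal,
    ← inner_conj_symm x, mul_left_comm, RCLike.conj_mul]
  norm_cast

theorem norm_det_sq_eq_prod_eigenvalues (W : Matrix n n 𝕜) :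
    ‖W.det‖ ^ 2 = ∏ i, (isHermitian_conjTranspose_mul_self W).eigenvalues i := by
  have := (isHermitian_conjTranspose_mul_self W).det_eq_prod_eigenvalues
  rw [det_mul, det_conjTranspose, RCLike.star_def, RCLike.conj_mul] at this
  exact_mod_cast this

theorem frobenius_norm_sq_eq_sum_eigenvalues (W : Matrix n n 𝕜) :
    ‖W‖ ^ 2 = ∑ i, (isHermitian_conjTranspose_mul_self W).eigenvalues i := by
  have := (isHermitian_conjTranspose_mul_self W).trace_eq_sum_eigenvalues
  simp only [trace, diag_apply, mul_apply, conjTranspose_apply, RCLike.star_def,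
    RCLike.conj_mul] at this
  rw [frobenius_norm_sq, sum_comm]
  exact_mod_cast this

theorem norm_toEuclideanLin_sq (W : Matrix n n 𝕜) (x : EuclideanSpace 𝕜 n) :
    ‖W.toEuclideanLin x‖ ^ 2 = RCLike.re ⟪x, (Wᴴ * W).toEuclideanLin x⟫_𝕜 := by
  rw [toLpLin_mul_same, toEuclideanLin_conjTranspose_eq_adjoint, LinearMap.comp_apply,
    LinearMap.adjoint_inner_right, inner_self_eq_norm_sq]

theorem norm_det_mul_norm_le (W : Matrix n n 𝕜) (x : EuclideanSpace 𝕜 n) :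
    ‖W.det‖ * ‖x‖ ≤ ‖W‖ ^ (Fintype.card n - 1) * ‖W.toEuclideanLin x‖ := by
  set hG := isHermitian_conjTranspose_mul_self W
  set b := hG.eigenvectorBasis
  refine (pow_le_pow_iff_left₀ (by positivity) (by positivity) two_ne_zero).mp ?_
  calc (‖W.det‖ * ‖x‖) ^ 2 = ∑ i, (∏ j, hG.eigenvalues j) * ‖⟪b i, x⟫_𝕜‖ ^ 2 := by
        rw [mul_pow, norm_det_sq_eq_prod_eigenvalues, ← b.sum_sq_norm_inner_right, mul_sum]
    _ ≤ ∑ i, hG.eigenvalues i * (‖W‖ ^ 2) ^ (Fintype.card n - 1) * ‖⟪b i, x⟫_𝕜‖ ^ 2 := by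
        gcongr with i
        rw [frobenius_norm_sq_eq_sum_eigenvalues, ← card_univ]
        exact prod_le_mul_pow_sum (fun j _ => eigenvalues_conjTranspose_mul_self_nonneg W j)
          (mem_univ i)
    _ = (‖W‖ ^ (Fintype.card n - 1) * ‖W.toEuclideanLin x‖) ^ 2 := by
        rw [mul_pow, norm_toEuclideanLin_sq, hG.re_inner_toEuclideanLin_self, mul_sum, ← pow_mul,
          mul_comm 2, pow_mul]
        exact sum_congr rfl fun i _ => by ring

theorem exists_sum_norm_mul_norm_det_le [Nonempty n] (W : Matrix n n 𝕜) (x : n → 𝕜) :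
    ∃ k, (∑ i, ‖x i‖) * ‖W.det‖ ≤
      Fintype.card n * ‖W‖ ^ (Fintype.card n - 1) * ‖(W *ᵥ x) k‖ := by
  obtain ⟨k, -, hk⟩ := exists_max_image univ (fun k => ‖(W *ᵥ x) k‖) univ_nonempty
  refine ⟨k, (pow_le_pow_iff_left₀ (by positivity) (by positivity) two_ne_zero).mp ?_⟩
  have hx := EuclideanSpace.sq_sum_norm_le_card_mul_norm_sq (WithLp.toLp 2 x)
  have hWx : ‖W.toEuclideanLin (WithLp.toLp 2 x)‖ ^ 2 ≤ Fintype.card n * ‖(W *ᵥ x) k‖ ^ 2 :=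
    EuclideanSpace.norm_sq_le_card_mul_sq _ k fun i => hk i (mem_univ i)
  calc ((∑ i, ‖x i‖) * ‖W.det‖) ^ 2
      ≤ (Fintype.card n * ‖WithLp.toLp 2 x‖ ^ 2) * ‖W.det‖ ^ 2 := by
        rw [mul_pow]; exact mul_le_mul_of_nonneg_right hx (by positivity)
    _ = Fintype.card n * (‖W.det‖ * ‖WithLp.toLp 2 x‖) ^ 2 := by ring
    _ ≤ Fintype.card n *
          (‖W‖ ^ (Fintype.card n - 1) * ‖W.toEuclideanLin (WithLp.toLp 2 x)‖) ^ 2 := by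
        gcongr ?_ * ?_ ^ 2
        exact norm_det_mul_norm_le W _
    _ = Fintype.card n * (‖W‖ ^ (Fintype.card n - 1)) ^ 2 *
          ‖W.toEuclideanLin (WithLp.toLp 2 x)‖ ^ 2 := by ring
    _ ≤ Fintype.card n * (‖W‖ ^ (Fintype.card n - 1)) ^ 2 *
          (Fintype.card n * ‖(W *ᵥ x) k‖ ^ 2) := by gcongr
    _ = _ := by ring

end Matrix

section Vandermonde

variable {K : Type*} [NormedField K] {ℓ : ℕ}

theorem norm_det_vandermonde (u : Fin ℓ → K) :
    ‖(vandermonde u).det‖ = ∏ i, ∏ j ∈ univ.filter (· < i), ‖u i - u j‖ := by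
  rw [det_vandermonde, norm_prod]
  simp_rw [norm_prod]
  exact prod_comm' fun i j => by simp

theorem frobenius_norm_vandermonde_sq (u : Fin ℓ → K) :
    ‖vandermonde u‖ ^ 2 = ∑ i, ∑ k ∈ range ℓ, ‖u i‖ ^ (2 * k) := by
  simp_rw [frobenius_norm_sq, vandermonde_apply, norm_pow, ← pow_mul, mul_comm _ 2]
  exact sum_congr rfl fun i _ => Fin.sum_univ_eq_sum_range (fun k => ‖u i‖ ^ (2 * k)) ℓ

theorem frobenius_norm_vandermonde_pos (hℓ : 1 ≤ ℓ) (u : Fin ℓ → K) : 0 < ‖vandermonde u‖ := by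
  refine norm_pos_iff.mpr fun h => ?_
  simpa [vandermonde_apply] using congrFun (congrFun h ⟨0, hℓ⟩) ⟨0, hℓ⟩

end Vandermonde

theorem stmt4_general (ℓ : ℕ) (hℓ : 1 ≤ ℓ) (a : Fin ℓ → ℝ) (u : Fin ℓ → ℂ)
    (ε : ℝ) (hsum : ε ≤ ∑ i, |a i|) :
    ∃ k < ℓ,
      ε / ℓ * ((∏ i, ∏ j ∈ Finset.univ.filter (· < i), ‖u i - u j‖) /
          (∑ i, ∑ k ∈ Finset.range ℓ, ‖u i‖ ^ (2 * k)) ^ ((ℓ - 1 : ℝ) / 2)) ≤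
        ‖∑ i, (a i : ℂ) * u i ^ k‖ := by
  have : Nonempty (Fin ℓ) := ⟨⟨0, hℓ⟩⟩
  obtain ⟨k, hk⟩ := exists_sum_norm_mul_norm_det_le (vandermonde u)ᵀ fun i => (a i : ℂ)
  refine ⟨k, k.isLt, ?_⟩
  have hfrob : (∑ i, ∑ k ∈ range ℓ, ‖u i‖ ^ (2 * k)) ^ ((ℓ - 1 : ℝ) / 2) =
      ‖vandermonde u‖ ^ (ℓ - 1) := by
    rw [← frobenius_norm_vandermonde_sq, ← Real.rpow_natCast, ← Real.rpow_natCast,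
      ← Real.rpow_mul (norm_nonneg _), Nat.cast_sub hℓ]
    ring_nf
  have hsum_a : ∑ i, ‖(a i : ℂ)‖ = ∑ i, |a i| := by simp
  have hmulVec :
      ((vandermonde u)ᵀ *ᵥ fun i => (a i : ℂ)) k = ∑ i, (a i : ℂ) * u i ^ (k : ℕ) := by
    simp [mulVec, dotProduct, vandermonde_apply, mul_comm]
  rw [det_transpose, norm_det_vandermonde, frobenius_norm_transpose, Fintype.card_fin, hsum_a,
    hmulVec] at hk
  have hV := frobenius_norm_vandermonde_pos hℓ u
  rw [hfrob, div_mul_div_comm, div_le_iff₀ (by positivity)]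
  calc ε * ∏ i, ∏ j ∈ univ.filter (· < i), ‖u i - u j‖
      ≤ (∑ i, |a i|) * ∏ i, ∏ j ∈ univ.filter (· < i), ‖u i - u j‖ := by gcongr
    _ ≤ _ := hk.trans_eq (by ring)

theorem stmt4 (ℓ : ℕ) (hℓ : 1 ≤ ℓ) (a : Fin ℓ → ℝ) (u : Fin ℓ → ℂ)
    (hu : Function.Injective u) (ε : ℝ) (hε : 0 < ε) (hsum : ε ≤ ∑ i, |a i|) :
    ∃ k < ℓ,
      ε / ℓ * ((∏ i, ∏ j ∈ Finset.univ.filter (· < i), ‖u i - u j‖) /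
          (∑ i, ∑ k ∈ Finset.range ℓ, ‖u i‖ ^ (2 * k)) ^ ((ℓ - 1 : ℝ) / 2)) ≤
        ‖∑ i, (a i : ℂ) * u i ^ k‖ :=
  stmt4_general ℓ hℓ a u ε hsum
end

section
/- Let $V$ be an invertible $\ell \times \ell$ complex matrix. Then the smallest singular value of $V$ satisfies $\sigma_{\min}(V) \ge |\det V| / \|V\|_F^{\ell - 1}$, where $\|V\|_F$ is the Frobenius norm of $V$. -/
/-!
The eigenvalues `λ j` of `Vᴴ V` are nonnegative, their product is `|det V|²` and their sum is
`‖V‖_F²`. Bounding every factor but `λ i` by the sum gives `|det V|² ≤ λ i · ‖V‖_F^(2(ℓ-1))`,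
and taking square roots yields the bound for every singular value, in particular the smallest.
-/

open Matrix Finset

theorem Finset.prod_le_mul_sum_pow {ι R : Type*} [Fintype ι] [CommSemiring R] [PartialOrder R]
    [IsOrderedRing R] {f : ι → R} (hf : ∀ j, 0 ≤ f j) (i : ι) :
    ∏ j, f j ≤ f i * (∑ j, f j) ^ (Fintype.card ι - 1) := by
  classical
  rw [← mul_prod_erase univ f (mem_univ i), ← card_univ, ← card_erase_of_mem (mem_univ i),
    ← prod_const]
  exact mul_le_mul_of_nonneg_left
    (prod_le_prod (fun j _ => hf j) fun j _ => single_le_sum (fun k _ => hf k) (mem_univ j)) (hf i)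

namespace Matrix

variable {𝕜 n : Type*} [RCLike 𝕜] [Fintype n] (V : Matrix n n 𝕜)

theorem trace_conjTranspose_mul_self :
    (Vᴴ * V).trace = ((∑ i, ∑ j, ‖V i j‖ ^ 2 : ℝ) : 𝕜) := by
  simp only [trace, diag, mul_apply, conjTranspose_apply, RCLike.star_def, RCLike.conj_mul]
  push_cast
  exact sum_comm

variable [DecidableEq n]

theorem sum_eigenvalues_conjTranspose_mul_self :
    ∑ j, (isHermitian_conjTranspose_mul_self V).eigenvalues j = ∑ i, ∑ j, ‖V i j‖ ^ 2 := by
  have h := (isHermitian_conjTranspose_mul_self V).trace_eq_sum_eigenvalues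
  rw [trace_conjTranspose_mul_self] at h
  exact_mod_cast h.symm

theorem prod_eigenvalues_conjTranspose_mul_self :
    ∏ j, (isHermitian_conjTranspose_mul_self V).eigenvalues j = ‖V.det‖ ^ 2 := by
  have h := (isHermitian_conjTranspose_mul_self V).det_eq_prod_eigenvalues
  rw [det_mul, det_conjTranspose, RCLike.star_def, RCLike.conj_mul] at h
  exact_mod_cast h.symm

theorem norm_det_sq_le_eigenvalue_mul_pow (i : n) :
    ‖V.det‖ ^ 2 ≤ (isHermitian_conjTranspose_mul_self V).eigenvalues i *
      (∑ i, ∑ j, ‖V i j‖ ^ 2) ^ (Fintype.card n - 1) := by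
  rw [← prod_eigenvalues_conjTranspose_mul_self, ← sum_eigenvalues_conjTranspose_mul_self]
  exact prod_le_mul_sum_pow (eigenvalues_conjTranspose_mul_self_nonneg V) i

end Matrix

theorem stmt5_general (ℓ : ℕ) (V : Matrix (Fin ℓ) (Fin ℓ) ℂ) :
    ∀ i, ‖V.det‖ / Real.sqrt (∑ i, ∑ j, ‖V i j‖ ^ 2) ^ (ℓ - 1) ≤
      Real.sqrt ((Matrix.isHermitian_conjTranspose_mul_self V).eigenvalues i) := by
  intro i
  have hkey := V.norm_det_sq_le_eigenvalue_mul_pow i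
  rw [Fintype.card_fin] at hkey
  refine div_le_of_le_mul₀ (by positivity) (Real.sqrt_nonneg _) ?_
  have hlam := eigenvalues_conjTranspose_mul_self_nonneg V i
  refine le_of_pow_le_pow_left₀ two_ne_zero (by positivity) ?_
  rwa [mul_pow, ← pow_mul, mul_comm (ℓ - 1), pow_mul, Real.sq_sqrt hlam, Real.sq_sqrt (by positivity)]

theorem stmt5 (ℓ : ℕ) (hℓ : 0 < ℓ) (V : Matrix (Fin ℓ) (Fin ℓ) ℂ) (hV : IsUnit V.det) :
    ∀ i, ‖V.det‖ / Real.sqrt (∑ i, ∑ j, ‖V i j‖ ^ 2) ^ (ℓ - 1) ≤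
      Real.sqrt ((Matrix.isHermitian_conjTranspose_mul_self V).eigenvalues i) :=
  stmt5_general ℓ V
end

section
/- Let $\ell \ge 1$, let $a_1, \dots, a_\ell$ be positive reals, and let $u_1, \dots, u_\ell$ be distinct complex numbers. Let $V$ be the $\ell \times \ell$ Vandermonde matrix $V_{i,k} = u_i^{k-1}$, $A = \mathrm{diag}(a_i)$, and $B = V^T A V$. Then $B$ is invertible, and if $w$ is the vector with $w_i = r_{\ell+1-i}$ (where $r_k$ is $(-1)^{k-1}$ times the $k$th elementary symmetric polynomial of $u_1,\dots,u_\ell$) and $v$ is the vector with $v_i = b_{\ell-1+i}$ where $b_k = \sum_i a_i u_i^k$, then $B w = v$. -/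
open Matrix Polynomial

lemma key_vieta (ℓ : ℕ) (u : Fin ℓ → ℂ) (r : ℕ → ℂ)
    (hr : ∀ k, 1 ≤ k → k ≤ ℓ →
      r k = (-1 : ℂ) ^ (k - 1) * ∑ t ∈ Finset.univ.powersetCard k, ∏ i ∈ t, u i)
    (j : Fin ℓ) : ∑ i : Fin ℓ, u j ^ (i : ℕ) * r (ℓ - (i : ℕ)) = u j ^ ℓ := by
  have h0 := congrArg (Polynomial.eval (u j))
    (Multiset.prod_X_sub_X_eq_sum_esymm (Finset.univ.val.map u))
  have hz : Polynomial.eval (u j) ((Finset.univ.val.map u).map (fun t => X - C t)).prod = 0 := by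
    rw [Multiset.map_map]
    have : ((Finset.univ.val.map fun i => X - C (u i))).prod = ∏ i, (X - C (u i)) := rfl
    simp only [Function.comp_def, this, eval_prod, eval_sub, eval_X, eval_C]
    exact Finset.prod_eq_zero (Finset.mem_univ j) (by ring)
  rw [hz] at h0
  have hcard : Multiset.card (Finset.univ.val.map u) = ℓ := by simp
  simp only [hcard, eval_finset_sum, eval_mul, eval_pow, eval_neg, eval_one, eval_C, eval_X] at h0
  have he : ∀ k, (Finset.univ.val.map u).esymm k
      = ∑ t ∈ Finset.univ.powersetCard k, ∏ i ∈ t, u i := fun k =>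
    Finset.esymm_map_val u Finset.univ k
  rw [Finset.sum_range_succ'] at h0
  have he0 : (Finset.univ.val.map u).esymm 0 = 1 := by rw [he 0]; simp
  rw [he0] at h0
  have h1 : u j ^ ℓ = ∑ k ∈ Finset.range ℓ,
      (-(-1:ℂ)^(k+1)) * ((Finset.univ.val.map u).esymm (k+1) * u j ^ (ℓ - (k+1))) := by
    simp only [neg_mul, Finset.sum_neg_distrib]
    simp only [pow_zero, one_mul, Nat.sub_zero] at h0
    linear_combination -h0
  have h2 : ∀ k ∈ Finset.range ℓ, (-(-1:ℂ)^(k+1)) * ((Finset.univ.val.map u).esymm (k+1) * u j ^ (ℓ - (k+1)))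
      = r (k+1) * u j ^ (ℓ - 1 - k) := by
    intro k hk
    rw [hr (k+1) (Nat.le_add_left 1 k) (Finset.mem_range.mp hk), he]
    have h3 : ℓ - (k+1) = ℓ - 1 - k := by omega
    rw [h3, Nat.add_sub_cancel]
    ring
  calc ∑ i : Fin ℓ, u j ^ (i : ℕ) * r (ℓ - (i : ℕ))
      = ∑ i ∈ Finset.range ℓ, u j ^ i * r (ℓ - i) := by
        rw [Finset.sum_range]
    _ = ∑ i ∈ Finset.range ℓ, u j ^ (ℓ - 1 - i) * r (ℓ - (ℓ - 1 - i)) := by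
        rw [Finset.sum_range_reflect (fun i => u j ^ i * r (ℓ - i)) ℓ]
    _ = ∑ i ∈ Finset.range ℓ, r (i+1) * u j ^ (ℓ - 1 - i) := by
        refine Finset.sum_congr rfl fun i hi => ?_
        have h4 : ℓ - (ℓ - 1 - i) = i + 1 := by
          have := Finset.mem_range.mp hi; omega
        rw [h4]; ring
    _ = u j ^ ℓ := by
        rw [h1]; exact (Finset.sum_congr rfl h2).symm

theorem stmt9 (ℓ : ℕ) (hℓ : 1 ≤ ℓ) (a : Fin ℓ → ℝ) (ha : ∀ i, 0 < a i)
    (u : Fin ℓ → ℂ) (hu : Function.Injective u)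
    (b : ℕ → ℂ) (hb : ∀ k, b k = ∑ i, (a i : ℂ) * u i ^ k)
    (r : ℕ → ℂ)
    (hr : ∀ k, 1 ≤ k → k ≤ ℓ →
      r k = (-1 : ℂ) ^ (k - 1) * ∑ t ∈ Finset.univ.powersetCard k, ∏ i ∈ t, u i) :
    IsUnit ((Matrix.vandermonde u)ᵀ * Matrix.diagonal (fun i => (a i : ℂ)) *
        Matrix.vandermonde u).det ∧
      ((Matrix.vandermonde u)ᵀ * Matrix.diagonal (fun i => (a i : ℂ)) *
          Matrix.vandermonde u).mulVec (fun i : Fin ℓ => r (ℓ + 1 - (i.1 + 1))) =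
        (fun i : Fin ℓ => b (ℓ - 1 + (i.1 + 1))) := by
  constructor
  · rw [det_mul, det_mul, det_transpose, det_diagonal]
    refine isUnit_iff_ne_zero.mpr ?_
    have hV : (Matrix.vandermonde u).det ≠ 0 := Matrix.det_vandermonde_ne_zero_iff.mpr hu
    have hD : (∏ i, (a i : ℂ)) ≠ 0 :=
      Finset.prod_ne_zero_iff.mpr fun i _ => by
        exact_mod_cast (ha i).ne'
    exact mul_ne_zero (mul_ne_zero hV hD) hV
  · have hVw : (Matrix.vandermonde u).mulVec (fun i : Fin ℓ => r (ℓ + 1 - (i.1 + 1)))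
        = fun j => u j ^ ℓ := by
      funext j
      simp only [Matrix.mulVec, dotProduct, Matrix.vandermonde_apply]
      have h5 : ∀ i : Fin ℓ, ℓ + 1 - (i.1 + 1) = ℓ - i.1 := fun i => by omega
      simp_rw [h5]
      exact key_vieta ℓ u r hr j
    rw [← Matrix.mulVec_mulVec, hVw, ← Matrix.mulVec_mulVec]
    funext i
    have hD : (Matrix.diagonal (fun i => (a i : ℂ))).mulVec (fun j => u j ^ ℓ)
        = fun j => (a j : ℂ) * u j ^ ℓ := by
      funext j; exact Matrix.mulVec_diagonal _ _ _
    rw [hD]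
    simp only [Matrix.mulVec, dotProduct, Matrix.transpose_apply, Matrix.vandermonde_apply]
    rw [hb]
    have h6 : ℓ - 1 + (i.1 + 1) = ℓ + i.1 := by omega
    rw [h6]
    refine Finset.sum_congr rfl fun j _ => ?_
    rw [pow_add]
    ring
end

section
/- Let $M$ be an invertible $k \times k$ complex matrix with smallest singular value $\sigma > 0$, and let $E$ be a $k \times k$ complex matrix with operator norm $\|E\| \le \sigma / (2k)$. Then $\frac{1}{2} \le \frac{|\det M|}{|\det(M+E)|} \le 2$. -/
open ContinuousLinearMap Matrix

/-!
Write `M + E = M A` with `A = M⁻¹ (M + E)`. If `A v = r v` with `v ≠ 0`, then `E v = (r - 1) M v`,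
and comparing `‖E v‖ ≤ ‖E‖ ‖v‖` with `‖M v‖ ≥ σ ‖v‖` (as `σ²` is the bottom of the spectrum of
`Mᴴ M`) gives `|r - 1| ≤ ‖E‖ / σ ≤ 1 / (2k)`.
Hence `|det A|`, the product of the `k` eigenvalues of `A`, lies between `(1 - 1/(2k))^k ≥ 1/2`
and `(1 + 1/(2k))^k ≤ 2`, and `|det M| / |det (M + E)| = 1 / |det A|`.
-/

theorem one_div_two_mul_le_one (k : ℕ) : 1 / (2 * k : ℝ) ≤ 1 := by
  rcases k.eq_zero_or_pos with rfl | hk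
  · simp
  · have : (1 : ℝ) ≤ k := by exact_mod_cast hk
    exact div_le_one_of_le₀ (by linarith) (by positivity)

theorem one_half_le_one_sub_pow (k : ℕ) : 1 / 2 ≤ (1 - 1 / (2 * k : ℝ)) ^ k := by
  rcases k.eq_zero_or_pos with rfl | hk
  · norm_num
  have hkd : (k : ℝ) * (1 / (2 * k)) = 1 / 2 := by field_simp
  calc (1 : ℝ) / 2 = 1 + k * -(1 / (2 * k)) := by rw [mul_neg, hkd]; norm_num
    _ ≤ (1 + -(1 / (2 * k))) ^ k :=
      one_add_mul_le_pow (by linarith [one_div_two_mul_le_one k]) k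
    _ = (1 - 1 / (2 * k)) ^ k := by rw [← sub_eq_add_neg]

theorem one_add_pow_le_two (k : ℕ) : (1 + 1 / (2 * k : ℝ)) ^ k ≤ 2 := by
  set d : ℝ := 1 / (2 * k)
  have hd : 0 ≤ d := by positivity
  have hd1 : d ≤ 1 := one_div_two_mul_le_one k
  have hprod : (1 + d) ^ k * (1 - d) ^ k ≤ 1 := by
    rw [← mul_pow]
    exact pow_le_one₀ (by nlinarith) (by nlinarith)
  nlinarith [one_half_le_one_sub_pow k, pow_nonneg (by linarith : 0 ≤ 1 + d) k]

section Multiset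

variable {K : Type*} [NormedField K] {d : ℝ}

theorem Multiset.pow_card_le_norm_prod (hd : d ≤ 1) (s : Multiset K)
    (hs : ∀ z ∈ s, ‖z - 1‖ ≤ d) : (1 - d) ^ card s ≤ ‖s.prod‖ := by
  induction s using Multiset.induction with
  | empty => simp
  | cons a s ih =>
    have ha : 1 - d ≤ ‖a‖ := by
      have := norm_sub_norm_le (1 : K) (1 - a)
      rw [norm_one, sub_sub_cancel, norm_sub_rev] at this
      linarith [hs a (mem_cons_self a s)]
    rw [prod_cons, card_cons, pow_succ', norm_mul]
    exact mul_le_mul ha (ih fun z hz => hs z (mem_cons_of_mem hz))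
      (pow_nonneg (by linarith) _) (norm_nonneg a)

theorem Multiset.norm_prod_le_pow_card (s : Multiset K) (hs : ∀ z ∈ s, ‖z - 1‖ ≤ d) :
    ‖s.prod‖ ≤ (1 + d) ^ card s := by
  induction s using Multiset.induction with
  | empty => simp
  | cons a s ih =>
    have ha : ‖a‖ ≤ 1 + d := by
      have := norm_le_norm_add_norm_sub' a 1
      rw [norm_one] at this
      linarith [hs a (mem_cons_self a s)]
    rw [prod_cons, card_cons, pow_succ', norm_mul]
    exact mul_le_mul ha (ih fun z hz => hs z (mem_cons_of_mem hz))
      (norm_nonneg _) ((norm_nonneg a).trans ha)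

end Multiset

theorem ContinuousLinearMap.mul_norm_sq_le_norm_apply_sq
    {E F : Type*} [NormedAddCommGroup E] [InnerProductSpace ℂ E] [CompleteSpace E]
    [NormedAddCommGroup F] [InnerProductSpace ℂ F] [CompleteSpace F]
    (T : E →L[ℂ] F) {r : ℝ} (hr : ∀ μ ∈ spectrum ℝ (adjoint T ∘L T), r ≤ μ) (x : E) :
    r * ‖x‖ ^ 2 ≤ ‖T x‖ ^ 2 := by
  have hle : algebraMap ℝ (E →L[ℂ] E) r ≤ adjoint T ∘L T :=
    (algebraMap_le_iff_le_spectrum (isPositive_adjoint_comp_self T).isSelfAdjoint).2 hr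
  simpa [inner_sub_left, adjoint_inner_left, ← Complex.coe_smul, inner_smul_left,
    inner_self_eq_norm_sq_to_K, ← Complex.ofReal_pow] using
    ((le_def _ _).1 hle).re_inner_nonneg_left x

theorem ContinuousLinearMap.norm_mul_le_opNorm_of_apply_eq_smul
    {𝕜 E F : Type*} [NontriviallyNormedField 𝕜] [NormedAddCommGroup E] [NormedSpace 𝕜 E]
    [NormedAddCommGroup F] [NormedSpace 𝕜 F] {T S : E →L[𝕜] F} {σ : ℝ} {x : E} {c : 𝕜}
    (hx : x ≠ 0) (hT : σ * ‖x‖ ≤ ‖T x‖) (hS : S x = c • T x) :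
    ‖c‖ * σ ≤ ‖S‖ := by
  refine le_of_mul_le_mul_right ?_ (norm_pos_iff.2 hx)
  calc ‖c‖ * σ * ‖x‖ = ‖c‖ * (σ * ‖x‖) := mul_assoc _ _ _
    _ ≤ ‖c‖ * ‖T x‖ := mul_le_mul_of_nonneg_left hT (norm_nonneg c)
    _ = ‖S x‖ := by rw [hS, norm_smul]
    _ ≤ ‖S‖ * ‖x‖ := S.le_opNorm x

namespace Matrix

variable {n : Type*} [Fintype n] [DecidableEq n]

theorem spectrum_toEuclideanCLM (A : Matrix n n ℂ) :
    spectrum ℝ (toEuclideanCLM (𝕜 := ℂ) A) = spectrum ℝ A :=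
  AlgEquiv.spectrum_eq ((toEuclideanCLM (𝕜 := ℂ) (n := n)).toAlgEquiv.restrictScalars ℝ) A

theorem adjoint_toEuclideanCLM_comp_self (M : Matrix n n ℂ) :
    adjoint (toEuclideanCLM (𝕜 := ℂ) M) ∘L toEuclideanCLM (𝕜 := ℂ) M =
      toEuclideanCLM (𝕜 := ℂ) (Mᴴ * M) := by
  rw [map_mul, ← star_eq_adjoint, ← map_star]
  rfl

theorem mul_norm_le_norm_toEuclideanCLM_apply (M : Matrix n n ℂ) {σ : ℝ} (hσ₀ : 0 ≤ σ)
    (hσ : ∀ i, σ ≤ √((isHermitian_conjTranspose_mul_self M).eigenvalues i))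
    (x : EuclideanSpace ℂ n) : σ * ‖x‖ ≤ ‖toEuclideanCLM (𝕜 := ℂ) M x‖ := by
  have hsq : (σ * ‖x‖) ^ 2 ≤ ‖toEuclideanCLM (𝕜 := ℂ) M x‖ ^ 2 := by
    rw [mul_pow]
    refine mul_norm_sq_le_norm_apply_sq _ ?_ x
    rw [adjoint_toEuclideanCLM_comp_self, spectrum_toEuclideanCLM,
      (isHermitian_conjTranspose_mul_self M).spectrum_real_eq_range_eigenvalues]
    rintro _ ⟨i, rfl⟩
    exact (Real.le_sqrt hσ₀ (eigenvalues_conjTranspose_mul_self_nonneg M i)).1 (hσ i)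
  exact pow_le_pow_iff_left₀ (by positivity) (norm_nonneg _) two_ne_zero |>.1 hsq

theorem exists_mulVec_eq_smul_of_isRoot_charpoly {K : Type*} [Field K] {A : Matrix n n K} {r : K}
    (hr : A.charpoly.IsRoot r) : ∃ v ≠ 0, A *ᵥ v = r • v := by
  rw [← mem_spectrum_iff_isRoot_charpoly, ← spectrum_toLin',
    ← Module.End.hasEigenvalue_iff_mem_spectrum] at hr
  obtain ⟨v, hv⟩ := hr.exists_hasEigenvector
  exact ⟨v, hv.2, hv.apply_eq_smul⟩

theorem norm_sub_one_mul_le_of_isRoot_charpoly {M E : Matrix n n ℂ} (hM : IsUnit M.det) {σ : ℝ}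
    (hσ : ∀ x, σ * ‖x‖ ≤ ‖toEuclideanCLM (𝕜 := ℂ) M x‖) {r : ℂ}
    (hr : (M⁻¹ * (M + E)).charpoly.IsRoot r) :
    ‖r - 1‖ * σ ≤ ‖toEuclideanCLM (𝕜 := ℂ) E‖ := by
  obtain ⟨v, hv, hAv⟩ := exists_mulVec_eq_smul_of_isRoot_charpoly hr
  have hEv : E *ᵥ v = (r - 1) • M *ᵥ v := by
    have := congrArg (M *ᵥ ·) hAv
    simp only [mulVec_mulVec, mul_nonsing_inv_cancel_left _ _ hM, mulVec_smul, add_mulVec] at this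
    rw [sub_smul, one_smul, ← this, add_sub_cancel_left]
  refine norm_mul_le_opNorm_of_apply_eq_smul (x := WithLp.toLp 2 v) ?_ (hσ _) ?_
  · simpa using hv
  · simp [toEuclideanCLM_toLp, hEv]

theorem norm_det_mem_Icc {K : Type*} [NormedField K] [IsAlgClosed K] (A : Matrix n n K)
    {d : ℝ} (hd : d ≤ 1) (h : ∀ r ∈ A.charpoly.roots, ‖r - 1‖ ≤ d) :
    ‖A.det‖ ∈ Set.Icc ((1 - d) ^ Fintype.card n) ((1 + d) ^ Fintype.card n) := by
  have hcard : A.charpoly.roots.card = Fintype.card n := by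
    rw [IsAlgClosed.card_roots_eq_natDegree, charpoly_natDegree_eq_dim]
  rw [det_eq_prod_roots_charpoly, ← hcard]
  exact ⟨Multiset.pow_card_le_norm_prod hd _ h, Multiset.norm_prod_le_pow_card _ h⟩

end Matrix

theorem stmt12_general (k : ℕ) (M E : Matrix (Fin k) (Fin k) ℂ) (σ : ℝ)
    (hM : IsUnit M.det)
    (hσ : σ = ⨅ i, Real.sqrt ((Matrix.isHermitian_conjTranspose_mul_self M).eigenvalues i))
    (hσpos : 0 < σ)
    (hE : ‖Matrix.toEuclideanCLM (𝕜 := ℂ) E‖ ≤ σ / (2 * k)) :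
    1 / 2 ≤ ‖M.det‖ / ‖(M + E).det‖ ∧
      ‖M.det‖ / ‖(M + E).det‖ ≤ 2 := by
  set A := M⁻¹ * (M + E)
  have hMx : ∀ x, σ * ‖x‖ ≤ ‖toEuclideanCLM (𝕜 := ℂ) M x‖ :=
    mul_norm_le_norm_toEuclideanCLM_apply M hσpos.le fun i =>
      hσ ▸ ciInf_le (Set.finite_range _).bddBelow i
  have hroots : ∀ r ∈ A.charpoly.roots, ‖r - 1‖ ≤ 1 / (2 * k) := fun r hr => by
    refine le_of_mul_le_mul_right ?_ hσpos
    calc ‖r - 1‖ * σ ≤ ‖toEuclideanCLM (𝕜 := ℂ) E‖ :=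
          norm_sub_one_mul_le_of_isRoot_charpoly hM hMx (Polynomial.isRoot_of_mem_roots hr)
      _ ≤ σ / (2 * k) := hE
      _ = 1 / (2 * k) * σ := by ring
  obtain ⟨hlow, hhigh⟩ := A.norm_det_mem_Icc (one_div_two_mul_le_one k) hroots
  rw [Fintype.card_fin] at hlow hhigh
  have hlow' : 1 / 2 ≤ ‖A.det‖ := (one_half_le_one_sub_pow k).trans hlow
  have hhigh' : ‖A.det‖ ≤ 2 := hhigh.trans (one_add_pow_le_two k)
  have hratio : ‖M.det‖ / ‖(M + E).det‖ = ‖A.det‖⁻¹ := by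
    rw [det_mul, det_nonsing_inv, Ring.inverse_eq_inv', norm_mul, norm_inv, mul_inv, inv_inv,
      div_eq_mul_inv]
  rw [hratio, one_div]
  exact ⟨inv_anti₀ (by linarith) hhigh', inv_le_of_inv_le₀ two_pos (one_div (2 : ℝ) ▸ hlow')⟩

theorem stmt12 (k : ℕ) (hk : 0 < k) (M E : Matrix (Fin k) (Fin k) ℂ) (σ : ℝ)
    (hM : IsUnit M.det)
    (hσ : σ = ⨅ i, Real.sqrt ((Matrix.isHermitian_conjTranspose_mul_self M).eigenvalues i))
    (hσpos : 0 < σ)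
    (hE : ‖Matrix.toEuclideanCLM (𝕜 := ℂ) E‖ ≤ σ / (2 * k)) :
    1 / 2 ≤ ‖M.det‖ / ‖(M + E).det‖ ∧
      ‖M.det‖ / ‖(M + E).det‖ ≤ 2 :=
  stmt12_general k M E σ hM hσ hσpos hE
end

section
/- Let $n \ge 1$ and let $t$ be an integer with $2\sqrt{n} \le t \le n$, and let $0 < p < n^{-1/2}$. Then there is a universal constant $c > 0$ such that $\Pr[\mathrm{Bin}(n,p) = t] \ge \left(\Pr[\mathrm{Bin}(n, n^{-1/2}) = t]\right)^{c \log(1/p)}$. -/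
/-!
Chernoff's argument bounds the upper tail at twice the mean: comparing a single term with the
binomial expansion of `(q r + 1 - q) ^ n` at `r = t / (n q)` gives
`Pr[Bin(n, q) = t] ≤ exp (-(log 2 - 1/2) t)` whenever `2 n q ≤ t`, in particular for `q = n^{-1/2}`.
Conversely `Pr[Bin(n, p) = t] ≥ p ^ t (1 - p) ^ n ≥ p ^ t exp (-2 p n) ≥ exp (-(log (1/p) + 1) t)`,
since `2 p n ≤ 2 √n ≤ t`. Because `log (1/p) > log 2`, raising the first bound to the power
`20 log (1/p)` brings it below the second.
-/

open Real

/-- `Pr[Bin(n, p) = t]`. -/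
def binomProb (n t : ℕ) (p : ℝ) : ℝ := n.choose t * p ^ t * (1 - p) ^ (n - t)

lemma binomProb_nonneg (n t : ℕ) {p : ℝ} (hp0 : 0 ≤ p) (hp1 : p ≤ 1) : 0 ≤ binomProb n t p := by
  unfold binomProb
  have : 0 ≤ 1 - p := by linarith
  positivity

lemma choose_mul_pow_mul_pow_le_add_pow {n t : ℕ} (ht : t ≤ n) {x y : ℝ} (hx : 0 ≤ x)
    (hy : 0 ≤ y) : n.choose t * x ^ t * y ^ (n - t) ≤ (x + y) ^ n := by
  rw [add_pow]
  refine le_of_eq_of_le (by ring) (Finset.single_le_sum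
    (f := fun k => x ^ k * y ^ (n - k) * (n.choose k : ℝ))
    (fun k _ => by positivity) (Finset.mem_range.mpr (Nat.lt_succ_of_le ht)))

lemma binomProb_mul_pow_le_exp {n t : ℕ} (ht : t ≤ n) {q r : ℝ} (hq0 : 0 ≤ q) (hq1 : q ≤ 1)
    (hr : 0 ≤ r) : binomProb n t q * r ^ t ≤ exp (n * q * (r - 1)) := calc
  binomProb n t q * r ^ t = n.choose t * (q * r) ^ t * (1 - q) ^ (n - t) := by
    rw [binomProb]; ring
  _ ≤ (q * r + (1 - q)) ^ n :=
    choose_mul_pow_mul_pow_le_add_pow ht (by positivity) (by linarith)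
  _ ≤ exp (q * (r - 1)) ^ n := by
    have : 0 ≤ q * r + (1 - q) := by nlinarith
    gcongr
    linarith [add_one_le_exp (q * (r - 1))]
  _ = exp (n * q * (r - 1)) := by rw [← exp_nat_mul]; ring_nf

lemma sub_sub_mul_log_div_le {μ t : ℝ} (hμ : 0 < μ) (ht : 2 * μ ≤ t) :
    t - μ - t * log (t / μ) ≤ -(log 2 - 1 / 2) * t := by
  have ht0 : 0 < t := by linarith
  have h := one_sub_inv_le_log_of_pos (show 0 < t / μ / 2 by positivity)
  rw [log_div (by positivity) two_ne_zero, inv_div] at h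
  have h' : t - 2 * μ ≤ t * log (t / μ) - t * log 2 := by
    have := mul_le_mul_of_nonneg_left h ht0.le
    rw [mul_sub, mul_sub, mul_one, show t * (2 / (t / μ)) = 2 * μ by field_simp] at this
    linarith
  linarith

lemma binomProb_le_exp_of_two_mul_le {n t : ℕ} (hn : 0 < n) (ht : t ≤ n) {q : ℝ} (hq0 : 0 < q)
    (hq1 : q ≤ 1) (hmean : 2 * (n * q) ≤ t) : binomProb n t q ≤ exp (-(log 2 - 1 / 2) * t) := by
  set μ : ℝ := n * q
  have hμ : 0 < μ := by positivity
  have hr : 0 < (t : ℝ) / μ := div_pos (by linarith) hμ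
  have hchernoff := binomProb_mul_pow_le_exp ht hq0.le hq1 hr.le
  have hpow : ((t : ℝ) / μ) ^ t = exp (t * log (t / μ)) := by rw [exp_nat_mul, exp_log hr]
  rw [hpow, show μ * ((t : ℝ) / μ - 1) = t - μ by field_simp, ← le_div_iff₀ (exp_pos _), ← exp_sub]
    at hchernoff
  exact hchernoff.trans (exp_le_exp.mpr (sub_sub_mul_log_div_le hμ hmean))

lemma exp_neg_two_mul_le_one_sub {p : ℝ} (hp0 : 0 ≤ p) (hp : p ≤ 1 / 2) :
    exp (-(2 * p)) ≤ 1 - p := by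
  have h1p : 0 < 1 - p := by linarith
  rw [← exp_log h1p, exp_le_exp]
  refine le_trans ?_ (one_sub_inv_le_log_of_pos h1p)
  have : (1 - p)⁻¹ ≤ 1 + 2 * p := by
    rw [inv_le_iff_one_le_mul₀ h1p]; nlinarith
  linarith

lemma pow_mul_exp_le_binomProb {n t : ℕ} (ht : t ≤ n) {p : ℝ} (hp0 : 0 ≤ p) (hp : p ≤ 1 / 2) :
    p ^ t * exp (-(2 * p * n)) ≤ binomProb n t p := calc
  p ^ t * exp (-(2 * p * n)) = 1 * p ^ t * exp (-(2 * p)) ^ n := by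
    rw [← exp_nat_mul]; ring_nf
  _ ≤ n.choose t * p ^ t * (1 - p) ^ n := by
    gcongr
    · exact_mod_cast Nat.choose_pos ht
    · exact exp_neg_two_mul_le_one_sub hp0 hp
  _ ≤ binomProb n t p := by
    unfold binomProb
    exact mul_le_mul_of_nonneg_left
      (pow_le_pow_of_le_one (by linarith) (by linarith) (Nat.sub_le n t)) (by positivity)

theorem stmt14 : ∃ c : ℝ, 0 < c ∧
    ∀ (n t : ℕ) (p : ℝ), 1 ≤ n → 2 * Real.sqrt n ≤ t → t ≤ n →
      0 < p → p < (n : ℝ) ^ (-(1 / 2) : ℝ) →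
      ((n.choose t : ℝ) * ((n : ℝ) ^ (-(1 / 2) : ℝ)) ^ t *
          (1 - (n : ℝ) ^ (-(1 / 2) : ℝ)) ^ (n - t)) ^ (c * Real.log (1 / p)) ≤
        (n.choose t : ℝ) * p ^ t * (1 - p) ^ (n - t) := by
  refine ⟨20, by norm_num, fun n t p hn ht2 htn hp0 hpq => ?_⟩
  have hn0 : (0 : ℝ) < n := by exact_mod_cast hn
  have hs0 : 0 < √n := sqrt_pos.mpr hn0
  have hq : (n : ℝ) ^ (-(1 / 2) : ℝ) = (√n)⁻¹ := by rw [rpow_neg hn0.le, sqrt_eq_rpow]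
  have hmean : (n : ℝ) * (√n)⁻¹ = √n := by rw [← div_eq_mul_inv, div_sqrt]
  have hs2 : 2 ≤ √n := by nlinarith [mul_self_sqrt hn0.le, (Nat.cast_le (α := ℝ)).mpr htn]
  have hq_half : (√n)⁻¹ ≤ 1 / 2 := by rw [inv_le_comm₀ hs0 (by norm_num)]; linarith
  rw [hq] at hpq ⊢
  have hpn : 2 * p * n ≤ t := by nlinarith
  set L := log (1 / p)
  have hL : log 2 < L := log_lt_log (by norm_num) (by rw [lt_one_div (by norm_num) hp0]; linarith)
  have hpow : p ^ t * exp (-t) = exp (-((L + 1) * t)) := by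
    rw [← exp_log hp0, ← exp_nat_mul, ← exp_add]
    simp only [L, one_div, log_inv]
    ring_nf
  show binomProb n t (√n)⁻¹ ^ (20 * L) ≤ binomProb n t p
  calc binomProb n t (√n)⁻¹ ^ (20 * L) ≤ exp (-(log 2 - 1 / 2) * t) ^ (20 * L) :=
        rpow_le_rpow (binomProb_nonneg n t (by positivity) (by linarith))
          (binomProb_le_exp_of_two_mul_le hn htn (by positivity) (by linarith)
            (by rwa [hmean]))
          (by linarith [log_two_gt_d9])
    _ = exp (-(log 2 - 1 / 2) * t * (20 * L)) := (exp_mul _ _).symm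
    _ ≤ exp (-((L + 1) * t)) := by
        have hc : L + 1 ≤ (log 2 - 1 / 2) * 20 * L := by nlinarith [log_two_gt_d9]
        gcongr
        nlinarith [mul_le_mul_of_nonneg_right hc (Nat.cast_nonneg t : (0 : ℝ) ≤ t)]
    _ = p ^ t * exp (-t) := hpow.symm
    _ ≤ p ^ t * exp (-(2 * p * n)) := by gcongr
    _ ≤ binomProb n t p := pow_mul_exp_le_binomProb htn hp0.le (by linarith)
end
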